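/- Let $\alpha \in (1/2,1)$, $t > t_0 > 0$, and let $K_s(x)$ satisfy $|K_s(x)| \leq C(s^{1/(2\alpha)}+|x|)^{-(n+1)}$ for all $s > 0$. Suppose $u$ satisfies $\|u\|_{GX} = \sup_{s>0} s^{1-1/(2\alpha)} \|u(\cdot,s)\|_{L^\infty} < \infty$. Then $t^{1-1/(2\alpha)} \Big\| \int_0^{t_0} \int_{\mathbb{R}^n} K_{t+t_0-s}(x-y)\, |u(y,s)|^2 \, dy\, ds \Big\|_{L^\infty_x} \leq C_\alpha (t_0/t)^{(1-\alpha)/\alpha} \|u\|_{GX}^2 \leq C_\alpha \|u\|_{GX}^2$. -/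

import Mathlib

/-!
For `s ≤ t₀ < t` the kernel is dominated by `C (t^{1/(2α)} + |x - y|)^{-(n+1)}` and `|u(y,s)|²` by
`‖u‖²_{GX} s^{(1-α)/α - 1}`. By translation and scaling of Lebesgue measure the `y`-integral of the
dominating kernel is `t^{-1/(2α)} ∫ (1 + |z|)^{-(n+1)} dz`, which is finite, and the `s`-integral of
`s^{(1-α)/α - 1}` over `(0, t₀]` is `t₀^{(1-α)/α} / ((1-α)/α)`, finite because `α < 1`.
Multiplying by `t^{1-1/(2α)}` leaves exactly `(t₀/t)^{(1-α)/α}`.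
-/

open MeasureTheory Real
open scoped ENNReal

/-- The `GX` norm `‖u‖_{GX} = sup_{s>0} s^{1-1/(2α)} ‖u(·,s)‖_{L^∞}`. -/
noncomputable def GXnorm (n : ℕ) (α : ℝ)
    (u : EuclideanSpace ℝ (Fin n) → ℝ → EuclideanSpace ℝ (Fin n)) : ℝ≥0∞ :=
  ⨆ (s : ℝ) (_ : 0 < s),
    ENNReal.ofReal (s ^ (1 - 1/(2*α))) *
      ⨆ x : EuclideanSpace ℝ (Fin n), (‖u x s‖₊ : ℝ≥0∞)

open Module Set

section HaarScaling

variable {E : Type*} [NormedAddCommGroup E] [NormedSpace ℝ E] [FiniteDimensional ℝ E]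
  [MeasurableSpace E] [BorelSpace E] (μ : Measure E) [μ.IsAddHaarMeasure]

theorem lintegral_eq_ofReal_pow_finrank_mul_lintegral_comp_smul {R : ℝ} (hR : 0 < R)
    (f : E → ℝ≥0∞) :
    ∫⁻ x, f x ∂μ = ENNReal.ofReal (R ^ finrank ℝ E) * ∫⁻ x, f (R • x) ∂μ := by
  have hRd : 0 < R ^ finrank ℝ E := by positivity
  have hcomp : ∫⁻ x, f (R • x) ∂μ = ∫⁻ x, f x ∂(μ.map (R • ·)) :=
    (lintegral_map_equiv f (Homeomorph.smulOfNeZero R hR.ne').toMeasurableEquiv).symm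
  rw [hcomp, Measure.map_addHaar_smul μ hR.ne', lintegral_smul_measure, smul_eq_mul, ← mul_assoc,
    ← ENNReal.ofReal_mul hRd.le, abs_of_pos (inv_pos.2 hRd), mul_inv_cancel₀ hRd.ne',
    ENNReal.ofReal_one, one_mul]

theorem lintegral_ofReal_add_norm_rpow {b : ℝ} (hb : 0 < b) (r : ℝ) :
    ∫⁻ z, ENNReal.ofReal ((b + ‖z‖) ^ r) ∂μ =
      ENNReal.ofReal (b ^ ((finrank ℝ E : ℝ) + r)) * ∫⁻ z, ENNReal.ofReal ((1 + ‖z‖) ^ r) ∂μ := by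
  have hscale : ∀ z : E, ENNReal.ofReal ((b + ‖b • z‖) ^ r) =
      ENNReal.ofReal (b ^ r) * ENNReal.ofReal ((1 + ‖z‖) ^ r) := fun z => by
    rw [norm_smul, norm_of_nonneg hb.le, ← ENNReal.ofReal_mul (by positivity),
      ← mul_rpow hb.le (by positivity), mul_add, mul_one]
  rw [lintegral_eq_ofReal_pow_finrank_mul_lintegral_comp_smul μ hb, lintegral_congr hscale,
    lintegral_const_mul' _ _ ENNReal.ofReal_ne_top, ← mul_assoc,
    ← ENNReal.ofReal_mul (by positivity), rpow_add hb, rpow_natCast]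

theorem lintegral_ofReal_add_norm_sub_rpow {b : ℝ} (hb : 0 < b) (x : E) :
    ∫⁻ y, ENNReal.ofReal ((b + ‖x - y‖) ^ (-(finrank ℝ E : ℝ) - 1)) ∂μ =
      ENNReal.ofReal (b⁻¹ * ∫ z, (1 + ‖z‖) ^ (-(finrank ℝ E : ℝ) - 1) ∂μ) := by
  have hint : Integrable (fun z : E => (1 + ‖z‖) ^ (-(finrank ℝ E : ℝ) - 1)) μ := by
    simpa only [neg_add'] using integrable_one_add_norm (μ := μ) (lt_add_one (finrank ℝ E : ℝ))
  rw [lintegral_sub_left_eq_self (fun z => ENNReal.ofReal ((b + ‖z‖) ^ (-(finrank ℝ E : ℝ) - 1))),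
    lintegral_ofReal_add_norm_rpow μ hb, ← ofReal_integral_eq_lintegral_ofReal hint
      (.of_forall fun z => by positivity), ← ENNReal.ofReal_mul (by positivity),
    show (finrank ℝ E : ℝ) + (-(finrank ℝ E : ℝ) - 1) = -1 by ring, rpow_neg_one]

end HaarScaling

theorem setLIntegral_Ioc_zero_ofReal_rpow_sub_one {β t₀ : ℝ} (hβ : 0 < β) (ht₀ : 0 ≤ t₀) :
    ∫⁻ s in Ioc 0 t₀, ENNReal.ofReal (s ^ (β - 1)) = ENNReal.ofReal (t₀ ^ β / β) := by
  have hp : -1 < β - 1 := by linarith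
  have hint : IntegrableOn (fun s : ℝ => s ^ (β - 1)) (Ioc 0 t₀) :=
    (intervalIntegrable_iff_integrableOn_Ioc_of_le ht₀).mp
      (intervalIntegral.intervalIntegrable_rpow' hp)
  rw [← ofReal_integral_eq_lintegral_ofReal hint
      ((ae_restrict_mem measurableSet_Ioc).mono fun s hs => rpow_nonneg hs.1.le _),
    ← intervalIntegral.integral_of_le ht₀, integral_rpow (Or.inl hp), sub_add_cancel,
    zero_rpow hβ.ne', sub_zero]

theorem coe_nnnorm_sq_le_GXnorm_sq_mul {n : ℕ} {α : ℝ} (hα : α ≠ 0)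
    (u : EuclideanSpace ℝ (Fin n) → ℝ → EuclideanSpace ℝ (Fin n)) {s : ℝ} (hs : 0 < s)
    (y : EuclideanSpace ℝ (Fin n)) :
    (‖u y s‖₊ : ℝ≥0∞) ^ 2 ≤ GXnorm n α u ^ 2 * ENNReal.ofReal (s ^ ((1 - α) / α - 1)) := by
  have hweighted : ENNReal.ofReal (s ^ (1 - 1/(2*α))) * ‖u y s‖₊ ≤ GXnorm n α u :=
    (mul_le_mul_right (le_iSup (fun x => (‖u x s‖₊ : ℝ≥0∞)) y) _).trans
      (le_iSup₂ (f := fun (s : ℝ) (_ : 0 < s) => ENNReal.ofReal (s ^ (1 - 1/(2*α))) *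
        ⨆ x, (‖u x s‖₊ : ℝ≥0∞)) s hs)
  have hunweight : (‖u y s‖₊ : ℝ≥0∞) =
      ENNReal.ofReal (s ^ (1/(2*α) - 1)) * (ENNReal.ofReal (s ^ (1 - 1/(2*α))) * ‖u y s‖₊) := by
    rw [← mul_assoc, ← ENNReal.ofReal_mul (rpow_nonneg hs.le _), ← rpow_add hs,
      sub_add_sub_cancel', sub_self, rpow_zero, ENNReal.ofReal_one, one_mul]
  have hsq : ENNReal.ofReal (s ^ (1/(2*α) - 1)) ^ 2 = ENNReal.ofReal (s ^ ((1 - α) / α - 1)) := by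
    rw [← ENNReal.ofReal_pow (rpow_nonneg hs.le _), ← rpow_mul_natCast hs.le]
    congr 2
    field_simp
    ring
  calc (‖u y s‖₊ : ℝ≥0∞) ^ 2 ≤ (ENNReal.ofReal (s ^ (1/(2*α) - 1)) * GXnorm n α u) ^ 2 := by
        rw [hunweight]; gcongr
    _ = GXnorm n α u ^ 2 * ENNReal.ofReal (s ^ ((1 - α) / α - 1)) := by rw [mul_pow, hsq, mul_comm]

theorem abs_le_mul_add_norm_rpow_of_le {E : Type*} [NormedAddCommGroup E] {K : ℝ → E → ℝ}
    {C a r : ℝ} (hC : 0 ≤ C) (ha : 0 ≤ a) (hr : r ≤ 0)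
    (hK : ∀ s x, 0 < s → |K s x| ≤ C * (s ^ a + ‖x‖) ^ r) {t τ : ℝ} (ht : 0 < t)
    (htτ : t ≤ τ) (x : E) :
    |K τ x| ≤ C * (t ^ a + ‖x‖) ^ r := by
  refine (hK τ x (ht.trans_le htτ)).trans (mul_le_mul_of_nonneg_left ?_ hC)
  exact rpow_le_rpow_of_nonpos (by positivity)
    (add_le_add_left (rpow_le_rpow ht.le htτ ha) _) hr

theorem rpow_one_sub_mul_inv_rpow_mul_rpow {α t t₀ : ℝ} (hα : α ≠ 0) (ht : 0 < t) (ht₀ : 0 ≤ t₀) :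
    t ^ (1 - 1/(2*α)) * (t ^ (1/(2*α)))⁻¹ * t₀ ^ ((1 - α) / α) = (t₀ / t) ^ ((1 - α) / α) := by
  rw [← rpow_neg ht.le, ← rpow_add ht, div_rpow ht₀ ht.le, mul_comm,
    div_eq_mul_inv (t₀ ^ _), ← rpow_neg ht.le]
  congr 2
  field_simp
  ring

section Duhamel

variable {n : ℕ} {α C t : ℝ} {K : ℝ → EuclideanSpace ℝ (Fin n) → ℝ}

theorem lintegral_kernel_mul_sq_le (hα : 0 < α) (hC : 0 ≤ C) (ht : 0 < t)
    (hK : ∀ s x, 0 < s → |K s x| ≤ C * (s ^ (1/(2*α)) + ‖x‖) ^ (-(n : ℝ) - 1))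
    (u : EuclideanSpace ℝ (Fin n) → ℝ → EuclideanSpace ℝ (Fin n)) {τ s : ℝ} (htτ : t ≤ τ)
    (hs : 0 < s) (x : EuclideanSpace ℝ (Fin n)) :
    ∫⁻ y, ENNReal.ofReal |K τ (x - y)| * (‖u y s‖₊ : ℝ≥0∞) ^ 2 ≤
      ENNReal.ofReal (C * ((t ^ (1/(2*α)))⁻¹ *
          ∫ z : EuclideanSpace ℝ (Fin n), (1 + ‖z‖) ^ (-(n : ℝ) - 1))) *
        (GXnorm n α u ^ 2 * ENNReal.ofReal (s ^ ((1 - α) / α - 1))) := by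
  have hb : 0 < t ^ (1/(2*α)) := rpow_pos_of_pos ht _
  have hkernel := lintegral_ofReal_add_norm_sub_rpow volume hb x
  rw [finrank_euclideanSpace_fin] at hkernel
  calc ∫⁻ y, ENNReal.ofReal |K τ (x - y)| * (‖u y s‖₊ : ℝ≥0∞) ^ 2
      ≤ ∫⁻ y, ENNReal.ofReal C * ENNReal.ofReal ((t ^ (1/(2*α)) + ‖x - y‖) ^ (-(n : ℝ) - 1)) *
          (GXnorm n α u ^ 2 * ENNReal.ofReal (s ^ ((1 - α) / α - 1))) := by
        refine lintegral_mono fun y => mul_le_mul' ?_ (coe_nnnorm_sq_le_GXnorm_sq_mul hα.ne' u hs y)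
        rw [← ENNReal.ofReal_mul hC]
        exact ENNReal.ofReal_le_ofReal (abs_le_mul_add_norm_rpow_of_le hC (by positivity)
          (by linarith [n.cast_nonneg (α := ℝ)]) hK ht htτ _)
    _ = _ := by
        rw [lintegral_mul_const _ (by fun_prop), lintegral_const_mul _ (by fun_prop), hkernel,
          ← ENNReal.ofReal_mul hC]

theorem iSup_setLIntegral_kernel_mul_sq_le (hα : 0 < α) (hα' : α < 1) (hC : 0 ≤ C)
    {t₀ : ℝ} (ht₀ : 0 < t₀) (htt : t₀ < t)
    (hK : ∀ s x, 0 < s → |K s x| ≤ C * (s ^ (1/(2*α)) + ‖x‖) ^ (-(n : ℝ) - 1))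
    (u : EuclideanSpace ℝ (Fin n) → ℝ → EuclideanSpace ℝ (Fin n)) :
    ⨆ x : EuclideanSpace ℝ (Fin n), ∫⁻ s in Ioc (0:ℝ) t₀,
        ∫⁻ y, ENNReal.ofReal |K (t + t₀ - s) (x - y)| * (‖u y s‖₊ : ℝ≥0∞) ^ 2 ≤
      ENNReal.ofReal (C * ((t ^ (1/(2*α)))⁻¹ *
          ∫ z : EuclideanSpace ℝ (Fin n), (1 + ‖z‖) ^ (-(n : ℝ) - 1))) *
        (GXnorm n α u ^ 2 * ENNReal.ofReal (t₀ ^ ((1 - α) / α) / ((1 - α) / α))) := by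
  refine iSup_le fun x => (setLIntegral_mono' measurableSet_Ioc fun s hs =>
    lintegral_kernel_mul_sq_le hα hC (ht₀.trans htt) hK u (by linarith [hs.2]) hs.1 x).trans ?_
  rw [lintegral_const_mul _ (by fun_prop), lintegral_const_mul _ (by fun_prop),
    setLIntegral_Ioc_zero_ofReal_rpow_sub_one (div_pos (by linarith) hα) ht₀.le]

end Duhamel

theorem stmt_16_general (n : ℕ) (α : ℝ) (hα : 1/2 < α) (hα' : α < 1)
    (C : ℝ) (hC : 0 ≤ C) :
    ∃ Cα : ℝ, 0 < Cα ∧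
      ∀ (t₀ t : ℝ), 0 < t₀ → t₀ < t →
        ∀ K : ℝ → EuclideanSpace ℝ (Fin n) → ℝ,
          (∀ s x, 0 < s → |K s x| ≤ C * (s ^ (1/(2*α)) + ‖x‖) ^ (-(n : ℝ) - 1)) →
          ∀ u : EuclideanSpace ℝ (Fin n) → ℝ → EuclideanSpace ℝ (Fin n),
            GXnorm n α u < ⊤ →
            (ENNReal.ofReal (t ^ (1 - 1/(2*α))) *
                ⨆ x : EuclideanSpace ℝ (Fin n),
                  ∫⁻ s in Set.Ioc (0:ℝ) t₀,
                    ∫⁻ y, ENNReal.ofReal |K (t + t₀ - s) (x - y)| *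
                      (‖u y s‖₊ : ℝ≥0∞) ^ 2
              ≤ ENNReal.ofReal (Cα * (t₀/t) ^ ((1 - α)/α)) * (GXnorm n α u) ^ 2) ∧
            ENNReal.ofReal (Cα * (t₀/t) ^ ((1 - α)/α)) * (GXnorm n α u) ^ 2
              ≤ ENNReal.ofReal Cα * (GXnorm n α u) ^ 2 := by
  have hα₀ : 0 < α := by linarith
  set β := (1 - α) / α
  have hβ : 0 < β := div_pos (by linarith) hα₀
  set c := ∫ z : EuclideanSpace ℝ (Fin n), (1 + ‖z‖) ^ (-(n : ℝ) - 1)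
  refine ⟨(C * c + 1) / β, by positivity, fun t₀ t ht₀ htt K hK u _ => ⟨?_, ?_⟩⟩
  · have ht : 0 < t := ht₀.trans htt
    set γ := 1 - 1/(2*α)
    set b := t ^ (1/(2*α))
    have hconst : C * c / β * (t₀ / t) ^ β = t ^ γ * (C * (b⁻¹ * c)) * (t₀ ^ β / β) := by
      rw [← rpow_one_sub_mul_inv_rpow_mul_rpow hα₀.ne' ht ht₀.le]; ring
    calc _ ≤ ENNReal.ofReal (t ^ γ) * (ENNReal.ofReal (C * (b⁻¹ * c)) *
          (GXnorm n α u ^ 2 * ENNReal.ofReal (t₀ ^ β / β))) := by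
          gcongr; exact iSup_setLIntegral_kernel_mul_sq_le hα₀ hα' hC ht₀ htt hK u
      _ = ENNReal.ofReal (C * c / β * (t₀ / t) ^ β) * GXnorm n α u ^ 2 := by
          rw [hconst, ENNReal.ofReal_mul (by positivity : 0 ≤ t ^ γ * (C * (b⁻¹ * c))),
            ENNReal.ofReal_mul (by positivity : 0 ≤ t ^ γ)]
          ring
      _ ≤ _ := by gcongr; linarith
  · gcongr
    exact mul_le_of_le_one_right (by positivity)
      (rpow_le_one (div_pos ht₀ (ht₀.trans htt)).le ((div_le_one (ht₀.trans htt)).2 htt.le) hβ.le)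

/-- Quantitative estimate used to show the solution at time `t₀` stays in the
critical Besov space:
`t^{1-1/(2α)} ‖∫_0^{t₀} ∫ K_{t+t₀-s}(x-y) |u(y,s)|² dy ds‖_{L^∞_x}
  ≤ C_α (t₀/t)^{(1-α)/α} ‖u‖_{GX}² ≤ C_α ‖u‖_{GX}²`. -/
theorem stmt_16 (n : ℕ) (hn : 1 ≤ n) (α : ℝ) (hα : 1/2 < α) (hα' : α < 1)
    (C : ℝ) (hC : 0 ≤ C) :
    ∃ Cα : ℝ, 0 < Cα ∧
      ∀ (t₀ t : ℝ), 0 < t₀ → t₀ < t →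
        ∀ K : ℝ → EuclideanSpace ℝ (Fin n) → ℝ,
          (∀ s x, 0 < s → |K s x| ≤ C * (s ^ (1/(2*α)) + ‖x‖) ^ (-(n : ℝ) - 1)) →
          ∀ u : EuclideanSpace ℝ (Fin n) → ℝ → EuclideanSpace ℝ (Fin n),
            GXnorm n α u < ⊤ →
            (ENNReal.ofReal (t ^ (1 - 1/(2*α))) *
                ⨆ x : EuclideanSpace ℝ (Fin n),
                  ∫⁻ s in Set.Ioc (0:ℝ) t₀,
                    ∫⁻ y, ENNReal.ofReal |K (t + t₀ - s) (x - y)| *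
                      (‖u y s‖₊ : ℝ≥0∞) ^ 2
              ≤ ENNReal.ofReal (Cα * (t₀/t) ^ ((1 - α)/α)) * (GXnorm n α u) ^ 2) ∧
            ENNReal.ofReal (Cα * (t₀/t) ^ ((1 - α)/α)) * (GXnorm n α u) ^ 2
              ≤ ENNReal.ofReal Cα * (GXnorm n α u) ^ 2 :=
  stmt_16_general n α hα hα' C hC
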